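/- arXiv:1808.02135 — 3 statements merged into one kernel-verified Lean document; each statement's English description precedes it below -/
import Mathlib

section
/- Let X be a metric space carrying an Ahlfors δ-regular measure μ whose support equals X, and let f be a dimension function satisfying r^{-δ}f(r) → ∞ as r → 0. Then H^f(B) = ∞ for every ball B in X with positive radius. -/
/-! Covering sets of small diameter by single balls turns the upper Ahlfors bound
`μ(B(x, ρ)) ≤ c₂ ρ^δ` together with `f(ρ) ≥ n c₂ ρ^δ` for small `ρ` into `n • μ ≤ H^f`
(the mass distribution principle), for every `n`. Since `μ` charges every ball,
`H^f(B) ≥ n μ(B)` for all `n` forces `H^f(B) = ∞`. -/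

open MeasureTheory Filter Set
open scoped ENNReal NNReal

noncomputable def hausdorffWith {X : Type*} [MetricSpace X] [MeasurableSpace X] [BorelSpace X]
    (f : ℝ → ℝ) : Measure X :=
  Measure.mkMetric (fun d : ℝ≥0∞ => ENNReal.ofReal (f d.toReal))

open scoped Topology

lemma subset_ball_of_ediam_lt {X : Type*} [PseudoMetricSpace X] {s : Set X} {x : X}
    (hx : x ∈ s) {ρ : ℝ} (hs : Metric.ediam s < ENNReal.ofReal ρ) : s ⊆ Metric.ball x ρ :=
  fun _ hy => Metric.mem_ball.2 <| edist_lt_ofReal.1 <|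
    (Metric.edist_le_ediam_of_mem hy hx).trans_lt hs

/-- Mass distribution principle tested on balls: right-continuity of `f` lets a set of
diameter `D` be compared with the balls of radius slightly above `D` around one of its points. -/
theorem le_hausdorffWith_of_eventually_ball_le {X : Type*} [MetricSpace X] [MeasurableSpace X]
    [BorelSpace X] {ν : Measure X} {f : ℝ → ℝ} (hf : ContinuousOn f (Ici 0))
    (h : ∀ᶠ ρ in 𝓝[>] 0, ∀ x, ν (Metric.ball x ρ) ≤ ENNReal.ofReal (f ρ)) :
    ν ≤ hausdorffWith f := by
  obtain ⟨ε, hε, hball⟩ := (nhdsGT_basis (0 : ℝ)).eventually_iff.1 h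
  refine Measure.le_mkMetric _ _ (ENNReal.ofReal (ε / 2)) (by simpa using hε) fun s hs => ?_
  rcases s.eq_empty_or_nonempty with rfl | ⟨x, hx⟩
  · simp
  set D := (Metric.ediam s).toReal
  have hD : Metric.ediam s = ENNReal.ofReal D :=
    (ENNReal.ofReal_toReal (ne_top_of_le_ne_top ENNReal.ofReal_ne_top hs)).symm
  have hD0 : 0 ≤ D := ENNReal.toReal_nonneg
  have hDε : D < ε := by
    rw [hD, ENNReal.ofReal_le_ofReal_iff (by positivity)] at hs
    linarith
  have hbound : ∀ᶠ ρ in 𝓝[>] D, ν s ≤ ENNReal.ofReal (f ρ) := by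
    filter_upwards [Ioo_mem_nhdsGT hDε] with ρ hρ
    have hsub : s ⊆ Metric.ball x ρ :=
      subset_ball_of_ediam_lt hx (hD ▸ (ENNReal.ofReal_lt_ofReal_iff (hD0.trans_lt hρ.1)).2 hρ.1)
    exact (measure_mono hsub).trans (hball ⟨hD0.trans_lt hρ.1, hρ.2⟩ x)
  have hf_right : Tendsto (fun ρ => ENNReal.ofReal (f ρ)) (𝓝[>] D) (𝓝 (ENNReal.ofReal (f D))) :=
    (ENNReal.continuous_ofReal.tendsto _).comp <| (hf D hD0).tendsto.mono_left <|
      nhdsWithin_mono D fun _ hy => hD0.trans (le_of_lt hy)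
  exact ge_of_tendsto hf_right hbound

lemma eventually_mul_rpow_le_of_tendsto {f : ℝ → ℝ} {δ : ℝ}
    (hlim : Tendsto (fun r : ℝ => r ^ (-δ) * f r) (𝓝[>] 0) atTop) (C : ℝ) :
    ∀ᶠ ρ in 𝓝[>] 0, C * ρ ^ δ ≤ f ρ := by
  filter_upwards [hlim.eventually (eventually_ge_atTop C), self_mem_nhdsWithin] with ρ hC hρ
  have hρδ : 0 < ρ ^ δ := Real.rpow_pos_of_pos hρ δ
  calc C * ρ ^ δ ≤ ρ ^ (-δ) * f ρ * ρ ^ δ := mul_le_mul_of_nonneg_right hC hρδ.le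
    _ = f ρ := by rw [Real.rpow_neg hρ.le, mul_comm _ (f ρ), mul_assoc, inv_mul_cancel₀ hρδ.ne',
      mul_one]

lemma measure_eq_top_of_forall_nsmul_le {X : Type*} [MeasurableSpace X] {μ ν : Measure X}
    (h : ∀ n : ℕ, (n : ℝ≥0∞) • μ ≤ ν) {s : Set X} (hs : μ s ≠ 0) : ν s = ∞ := by
  refine top_le_iff.1 ?_
  calc ∞ = (⨆ n : ℕ, (n : ℝ≥0∞)) * μ s := by rw [ENNReal.iSup_natCast, ENNReal.top_mul hs]
    _ = ⨆ n : ℕ, (n : ℝ≥0∞) * μ s := ENNReal.iSup_mul _ _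
    _ ≤ ν s := iSup_le fun n => h n s

theorem stmt4_general {X : Type*} [MetricSpace X] [MeasurableSpace X] [BorelSpace X]
    (δ : ℝ) (μ : Measure X)
    (c₁ c₂ r₀ : ℝ) (hr₀ : 0 < r₀)
    -- μ has full support:
    (hsupp : ∀ x : X, ∀ r : ℝ, 0 < r → 0 < μ (Metric.ball x r))
    -- Ahlfors δ-regularity:
    (hreg : ∀ x : X, ∀ r : ℝ, 0 < r → r ≤ r₀ →
      ENNReal.ofReal (c₁ * r ^ δ) ≤ μ (Metric.ball x r) ∧
        μ (Metric.ball x r) ≤ ENNReal.ofReal (c₂ * r ^ δ))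
    (f : ℝ → ℝ)
    (hfcont : ContinuousOn f (Set.Ici 0))
    (hlim : Tendsto (fun r : ℝ => r ^ (-δ) * f r) (nhdsWithin 0 (Set.Ioi 0)) atTop) :
    ∀ x : X, ∀ r : ℝ, 0 < r → hausdorffWith f (Metric.ball x r) = ∞ := by
  intro x r hr
  refine measure_eq_top_of_forall_nsmul_le (μ := μ) (fun n => ?_) (hsupp x r hr).ne'
  refine le_hausdorffWith_of_eventually_ball_le hfcont ?_
  filter_upwards [eventually_mul_rpow_le_of_tendsto hlim (n * c₂), Ioc_mem_nhdsGT hr₀]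
    with ρ hfρ hρ y
  calc ((n : ℝ≥0∞) • μ) (Metric.ball y ρ) = n * μ (Metric.ball y ρ) := rfl
    _ ≤ n * ENNReal.ofReal (c₂ * ρ ^ δ) := by gcongr; exact (hreg y ρ hρ.1 hρ.2).2
    _ = ENNReal.ofReal (n * c₂ * ρ ^ δ) := by
      rw [mul_assoc, ENNReal.ofReal_mul (Nat.cast_nonneg n), ENNReal.ofReal_natCast]
    _ ≤ ENNReal.ofReal (f ρ) := ENNReal.ofReal_le_ofReal hfρ

/-- If `X` carries an Ahlfors `δ`-regular measure with full support and `f` is a dimension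
function with `r^{-δ} f(r) → ∞` as `r → 0⁺`, then `H^f(B) = ∞` for every ball of positive
radius. -/
theorem stmt4 {X : Type*} [MetricSpace X] [MeasurableSpace X] [BorelSpace X]
    (δ : ℝ) (hδ : 0 < δ) (μ : Measure X)
    (c₁ c₂ r₀ : ℝ) (hc₁ : 0 < c₁) (hc₁1 : c₁ < 1) (hc₂ : 1 < c₂) (hr₀ : 0 < r₀)
    -- μ has full support:
    (hsupp : ∀ x : X, ∀ r : ℝ, 0 < r → 0 < μ (Metric.ball x r))
    -- Ahlfors δ-regularity:
    (hreg : ∀ x : X, ∀ r : ℝ, 0 < r → r ≤ r₀ →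
      ENNReal.ofReal (c₁ * r ^ δ) ≤ μ (Metric.ball x r) ∧
        μ (Metric.ball x r) ≤ ENNReal.ofReal (c₂ * r ^ δ))
    (f : ℝ → ℝ) (hf0 : f 0 = 0) (hfmono : MonotoneOn f (Set.Ici 0))
    (hfcont : ContinuousOn f (Set.Ici 0))
    (hlim : Tendsto (fun r : ℝ => r ^ (-δ) * f r) (nhdsWithin 0 (Set.Ioi 0)) atTop) :
    ∀ x : X, ∀ r : ℝ, 0 < r → hausdorffWith f (Metric.ball x r) = ∞ :=
  stmt4_general δ μ c₁ c₂ r₀ hr₀ hsupp hreg f hfcont hlim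
end

section
/- If X is an Ahlfors δ-regular metric space (i.e., there is an Ahlfors δ-regular measure with support equal to X), then the restriction of the δ-dimensional Hausdorff measure H^δ to X is itself Ahlfors δ-regular: there are constants 0 < c₁' ≤ c₂' < ∞ and r₀ > 0 such that c₁' r^δ ≤ H^δ(B(x,r) ∩ X) ≤ c₂' r^δ for all x ∈ X and r ≤ r₀. -/
/-!
Lower bound: the upper Ahlfors bound gives `μ s ≤ c₂ (diam s)^δ` for every small set `s` (the
mass distribution principle), hence `μ / c₂ ≤ μH[δ]`. Upper bound: a maximal `ε`-separated subset
of `B(x, r)` is an `ε`-net whose points carry disjoint balls of radius `ε/2`, each of mass at least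
`c₁ (ε/2)^δ`, inside `B(x, 2r)`, of mass at most `c₂ (2r)^δ`. So `B(x, r)` is covered by
`≲ (c₂/c₁) (r/ε)^δ` sets of diameter `2ε`, which bounds `μH[δ] (B(x, r))` by a multiple of `r^δ`.
-/

open MeasureTheory Filter Set Metric
open scoped ENNReal NNReal Topology

theorem Set.PairwiseDisjoint.encard_mul_le_measure {ι α : Type*} [MeasurableSpace α]
    {ν : Measure α} {C : Set ι} {s : ι → Set α} {U : Set α} {a : ℝ≥0∞}
    (hC : C.PairwiseDisjoint s) (hs : ∀ i ∈ C, MeasurableSet (s i)) (hsU : ∀ i ∈ C, s i ⊆ U)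
    (ha : ∀ i ∈ C, a ≤ ν (s i)) : C.encard * a ≤ ν U :=
  calc C.encard * a = ∑' _ : C, a := (ENNReal.tsum_const a).symm
    _ ≤ ∑' i : C, ν (s i) := ENNReal.tsum_le_tsum fun i ↦ ha i i.2
    _ ≤ ν (⋃ i : C, s i) := tsum_meas_le_meas_iUnion_of_disjoint ν (fun i ↦ hs i i.2)
        fun i j hij ↦ hC i.2 j.2 (Subtype.coe_ne_coe.mpr hij)
    _ ≤ ν U := measure_mono (iUnion_subset fun i ↦ hsU i i.2)

theorem Metric.exists_isSeparated_isCover {X : Type*} [PseudoEMetricSpace X] (ε : ℝ≥0)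
    (s : Set X) : ∃ N ⊆ s, IsSeparated ε N ∧ IsCover ε s N := by
  obtain ⟨N, hN⟩ := zorn_subset {N | N ⊆ s ∧ IsSeparated ε N} fun c hc hchain ↦
    ⟨⋃₀ c, ⟨sUnion_subset fun N hN ↦ (hc hN).1,
      (pairwise_sUnion hchain.directedOn).mpr fun N hN ↦ (hc hN).2⟩,
      fun _ ↦ subset_sUnion_of_mem⟩
  exact ⟨N, hN.prop.1, hN.prop.2, .of_maximal_isSeparated hN⟩

theorem hausdorffMeasure_le_of_coveringNumber_mul_rpow_le {X : Type*} [EMetricSpace X]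
    [MeasurableSpace X] [BorelSpace X] {d : ℝ} (hd : 0 ≤ d) {A : Set X} {K : ℝ≥0∞}
    (h : ∀ᶠ ε in 𝓝[>] (0 : ℝ≥0), (coveringNumber ε A : ℝ≥0∞) * (ε : ℝ≥0∞) ^ d ≤ K) :
    μH[d] A ≤ 2 ^ d * K := by
  rcases eq_or_ne K ⊤ with rfl | hK
  · simp [ENNReal.mul_top, (ENNReal.rpow_pos two_pos ENNReal.ofNat_ne_top).ne']
  have hfinite : ∀ᶠ ε in 𝓝[>] (0 : ℝ≥0), coveringNumber ε A ≠ ⊤ := by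
    filter_upwards [h, self_mem_nhdsWithin] with ε hε hε0 htop
    rw [htop, ENat.toENNReal_top, ENNReal.top_mul
      (ENNReal.rpow_pos (by simpa using hε0) ENNReal.coe_ne_top).ne'] at hε
    exact hK (top_le_iff.mp hε)
  let _ (ε : ℝ≥0) : Fintype (minimalCover ε A) := finite_minimalCover.fintype
  have hlim : Tendsto (fun ε : ℝ≥0 ↦ 2 * (ε : ℝ≥0∞)) (𝓝[>] 0) (𝓝 0) := by
    have : Tendsto (fun ε : ℝ≥0 ↦ 2 * (ε : ℝ≥0∞)) (𝓝 0) (𝓝 (2 * ((0 : ℝ≥0) : ℝ≥0∞))) :=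
      (ENNReal.continuous_const_mul ENNReal.ofNat_ne_top).tendsto' _ _ rfl |>.comp
        ENNReal.continuous_coe.continuousAt
    simpa using this.mono_left nhdsWithin_le_nhds
  refine (Measure.hausdorffMeasure_le_liminf_sum d A _ hlim
    (fun ε (i : minimalCover ε A) ↦ closedEBall (i : X) ε)
    (.of_forall fun ε i ↦ ediam_closedEBall_le) ?_).trans
    (liminf_le_of_frequently_le' (Eventually.frequently ?_))
  · filter_upwards [hfinite] with ε hε
    simpa [iUnion_subtype, ← isCover_iff_subset_iUnion_closedEBall]
      using isCover_minimalCover hε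
  · filter_upwards [h, hfinite] with ε hε hfin
    have hcard : (Fintype.card (minimalCover ε A) : ℝ≥0∞) = coveringNumber ε A := by
      rw [← encard_minimalCover hfin, Set.encard, ENat.card_eq_coe_fintype_card]; rfl
    calc ∑ i : minimalCover ε A, ediam (closedEBall (i : X) ε) ^ d
        ≤ ∑ _i : minimalCover ε A, (2 * (ε : ℝ≥0∞)) ^ d :=
          Finset.sum_le_sum fun i _ ↦ ENNReal.rpow_le_rpow ediam_closedEBall_le hd
      _ = 2 ^ d * (coveringNumber ε A * (ε : ℝ≥0∞) ^ d) := by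
          rw [Finset.sum_const, Finset.card_univ, nsmul_eq_mul, hcard,
            ENNReal.mul_rpow_of_nonneg _ _ hd]
          ring
      _ ≤ 2 ^ d * K := by gcongr

theorem measure_le_ofReal_mul_ediam_rpow {X : Type*} [PseudoMetricSpace X] [MeasurableSpace X]
    {μ : Measure X} {c δ r₀ : ℝ} (hδ : 0 < δ)
    (hμ : ∀ x r, 0 < r → r ≤ r₀ → μ (ball x r) ≤ .ofReal (c * r ^ δ))
    {s : Set X} (hs : ediam s < .ofReal r₀) : μ s ≤ .ofReal c * ediam s ^ δ := by
  rcases s.eq_empty_or_nonempty with rfl | ⟨y, hy⟩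
  · simp
  -- `s` lies in every ball about `y` of radius `t > diam s`; let `t` decrease to `diam s`.
  have hdiam : diam s < r₀ := ENNReal.toReal_lt_of_lt_ofReal hs
  have hball (t : ℝ) (ht : diam s < t) : s ⊆ ball y t := fun z hz ↦
    (dist_le_diam_of_mem' hs.ne_top hz hy).trans_lt ht
  have hcont : ContinuousAt (fun t ↦ ENNReal.ofReal (c * t ^ δ)) (diam s) :=
    ENNReal.continuous_ofReal.continuousAt.comp
      (continuousAt_const.mul (Real.continuousAt_rpow_const _ _ (.inr hδ.le)))
  have hle : μ s ≤ .ofReal (c * diam s ^ δ) := by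
    refine ge_of_tendsto (hcont.tendsto.mono_left (nhdsWithin_le_nhds (s := Ioi (diam s)))) ?_
    filter_upwards [Ioc_mem_nhdsGT hdiam] with t ht
    exact (measure_mono (hball t ht.1)).trans (hμ y t (diam_nonneg.trans_lt ht.1) ht.2)
  rwa [ENNReal.ofReal_mul' (by positivity), ← ENNReal.ofReal_rpow_of_nonneg diam_nonneg hδ.le,
    diam, ENNReal.ofReal_toReal hs.ne_top] at hle

theorem inv_smul_le_hausdorffMeasure_of_measure_ball_le {X : Type*} [MetricSpace X]
    [MeasurableSpace X] [BorelSpace X] {μ : Measure X} {c δ r₀ : ℝ} (hc : 0 < c) (hδ : 0 < δ) (hr₀ : 0 < r₀)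
    (hμ : ∀ x r, 0 < r → r ≤ r₀ → μ (ball x r) ≤ .ofReal (c * r ^ δ)) :
    (ENNReal.ofReal c)⁻¹ • μ ≤ μH[δ] := by
  refine Measure.le_hausdorffMeasure δ _ (.ofReal (r₀ / 2)) (by simp [hr₀]) fun s hs ↦ ?_
  rw [Measure.smul_apply, smul_eq_mul,
    ENNReal.inv_mul_le_iff (by simp [hc]) ENNReal.ofReal_ne_top]
  exact measure_le_ofReal_mul_ediam_rpow hδ hμ
    (hs.trans_lt (ENNReal.ofReal_lt_ofReal_iff hr₀ |>.mpr (half_lt_self hr₀)))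

section AhlforsRegular

variable {X : Type*} [MetricSpace X] [MeasurableSpace X] {μ : Measure X} {δ c₁ c₂ r₀ : ℝ}

theorem coveringNumber_ball_mul_le [OpensMeasurableSpace X]
    (hlow : ∀ x r, 0 < r → r ≤ r₀ → .ofReal (c₁ * r ^ δ) ≤ μ (ball x r))
    (hup : ∀ x r, 0 < r → r ≤ r₀ → μ (ball x r) ≤ .ofReal (c₂ * r ^ δ))
    {x : X} {r : ℝ} {ε : ℝ≥0} (hε : 0 < ε) (hεr : ε ≤ r) (hr : 2 * r ≤ r₀) :
    (coveringNumber ε (ball x r) : ℝ≥0∞) * .ofReal (c₁ * (ε / 2) ^ δ) ≤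
      .ofReal (c₂ * (2 * r) ^ δ) := by
  obtain ⟨N, hNsub, hNsep, hNcov⟩ := exists_isSeparated_isCover ε (ball x r)
  have hdisj : N.PairwiseDisjoint fun y ↦ ball y (ε / 2) := fun a ha b hb hab ↦
    ball_disjoint_ball <| by
      have : (ε : ℝ≥0∞) < edist a b := hNsep ha hb hab
      rw [edist_dist, ← ENNReal.ofReal_coe_nnreal, ENNReal.ofReal_lt_ofReal_iff'] at this
      linarith [this.1]
  have hε' : (0 : ℝ) < ε := hε
  calc (coveringNumber ε (ball x r) : ℝ≥0∞) * .ofReal (c₁ * (ε / 2) ^ δ)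
      ≤ N.encard * .ofReal (c₁ * (ε / 2) ^ δ) := by
        gcongr; exact hNcov.coveringNumber_le_encard hNsub
    _ ≤ μ (ball x (2 * r)) :=
        hdisj.encard_mul_le_measure (fun _ _ ↦ measurableSet_ball)
          (fun y hy ↦ ball_subset_ball' (by linarith [mem_ball.mp (hNsub hy)]))
          (fun y _ ↦ hlow y _ (by positivity) (by linarith))
    _ ≤ .ofReal (c₂ * (2 * r) ^ δ) := hup x _ (by linarith) hr

theorem hausdorffMeasure_ball_le [BorelSpace X] (hδ : 0 < δ) (hc₁ : 0 < c₁)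
    (hlow : ∀ x r, 0 < r → r ≤ r₀ → .ofReal (c₁ * r ^ δ) ≤ μ (ball x r))
    (hup : ∀ x r, 0 < r → r ≤ r₀ → μ (ball x r) ≤ .ofReal (c₂ * r ^ δ))
    (x : X) {r : ℝ} (hr : 0 < r) (hr₀ : 2 * r ≤ r₀) :
    μH[δ] (ball x r) ≤ .ofReal (8 ^ δ * c₂ / c₁ * r ^ δ) := by
  have h2 : (0 : ℝ) < 2 ^ δ := by positivity
  have h8 : (8 : ℝ) ^ δ = 2 ^ δ * 2 ^ δ * 2 ^ δ := by
    rw [← Real.mul_rpow, ← Real.mul_rpow] <;> norm_num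
  have hK : ∀ᶠ ε in 𝓝[>] (0 : ℝ≥0), (coveringNumber ε (ball x r) : ℝ≥0∞) * (ε : ℝ≥0∞) ^ δ ≤
      .ofReal (2 ^ δ * 2 ^ δ * c₂ / c₁ * r ^ δ) := by
    filter_upwards [Ioc_mem_nhdsGT (Real.toNNReal_pos.mpr hr)] with ε ⟨hε, hεr⟩
    have hεr' : (ε : ℝ) ≤ r := (Real.le_toNNReal_iff_coe_le hr.le).mp hεr
    have hrescale : (ε : ℝ≥0∞) ^ δ = .ofReal (2 ^ δ / c₁) * .ofReal (c₁ * (ε / 2) ^ δ) := by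
      rw [← ENNReal.ofReal_mul (by positivity), ← ENNReal.ofReal_coe_nnreal,
        ENNReal.ofReal_rpow_of_nonneg ε.coe_nonneg hδ.le, Real.div_rpow ε.coe_nonneg zero_le_two]
      field_simp
    calc (coveringNumber ε (ball x r) : ℝ≥0∞) * (ε : ℝ≥0∞) ^ δ
        = .ofReal (2 ^ δ / c₁) *
            ((coveringNumber ε (ball x r) : ℝ≥0∞) * .ofReal (c₁ * (ε / 2) ^ δ)) := by
          rw [hrescale]; ring
      _ ≤ .ofReal (2 ^ δ / c₁) * .ofReal (c₂ * (2 * r) ^ δ) := by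
          gcongr; exact coveringNumber_ball_mul_le hlow hup hε hεr' hr₀
      _ = .ofReal (2 ^ δ * 2 ^ δ * c₂ / c₁ * r ^ δ) := by
          rw [← ENNReal.ofReal_mul (by positivity), Real.mul_rpow zero_le_two hr.le]
          ring_nf
  calc μH[δ] (ball x r) ≤ 2 ^ δ * .ofReal (2 ^ δ * 2 ^ δ * c₂ / c₁ * r ^ δ) :=
        hausdorffMeasure_le_of_coveringNumber_mul_rpow_le hδ.le hK
    _ = .ofReal (8 ^ δ * c₂ / c₁ * r ^ δ) := by
        rw [← ENNReal.ofReal_ofNat, ENNReal.ofReal_rpow_of_nonneg zero_le_two hδ.le,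
          ← ENNReal.ofReal_mul h2.le, h8]
        ring_nf

theorem ofReal_mul_rpow_le_hausdorffMeasure_ball [BorelSpace X] (hδ : 0 < δ) (hc₂ : 0 < c₂)
    (hr₀ : 0 < r₀) (hlow : ∀ x r, 0 < r → r ≤ r₀ → .ofReal (c₁ * r ^ δ) ≤ μ (ball x r))
    (hup : ∀ x r, 0 < r → r ≤ r₀ → μ (ball x r) ≤ .ofReal (c₂ * r ^ δ))
    (x : X) {r : ℝ} (hr : 0 < r) (hrr₀ : r ≤ r₀) :
    .ofReal (c₁ / c₂ * r ^ δ) ≤ μH[δ] (ball x r) :=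
  calc ENNReal.ofReal (c₁ / c₂ * r ^ δ) = (ENNReal.ofReal c₂)⁻¹ * .ofReal (c₁ * r ^ δ) := by
        rw [← ENNReal.ofReal_inv_of_pos hc₂, ← ENNReal.ofReal_mul (by positivity)]
        ring_nf
    _ ≤ ((ENNReal.ofReal c₂)⁻¹ • μ) (ball x r) := by
        rw [Measure.smul_apply, smul_eq_mul]; gcongr; exact hlow x r hr hrr₀
    _ ≤ μH[δ] (ball x r) := inv_smul_le_hausdorffMeasure_of_measure_ball_le hc₂ hδ hr₀ hup _

end AhlforsRegular

/-- If `X` is an Ahlfors `δ`-regular metric space (some measure of full support is Ahlfors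
`δ`-regular), then the `δ`-dimensional Hausdorff measure on `X` is itself Ahlfors
`δ`-regular. -/
theorem stmt5 {X : Type*} [MetricSpace X] [MeasurableSpace X] [BorelSpace X]
    (δ : ℝ) (hδ : 0 < δ)
    (hX : ∃ (μ : Measure X) (c₁ c₂ r₀ : ℝ), 0 < c₁ ∧ c₁ < 1 ∧ 1 < c₂ ∧ 0 < r₀ ∧
      (∀ x : X, ∀ r : ℝ, 0 < r → 0 < μ (Metric.ball x r)) ∧
      (∀ x : X, ∀ r : ℝ, 0 < r → r ≤ r₀ →
        ENNReal.ofReal (c₁ * r ^ δ) ≤ μ (Metric.ball x r) ∧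
          μ (Metric.ball x r) ≤ ENNReal.ofReal (c₂ * r ^ δ))) :
    ∃ c₁' c₂' r₀' : ℝ, 0 < c₁' ∧ c₁' ≤ c₂' ∧ 0 < r₀' ∧
      ∀ x : X, ∀ r : ℝ, 0 < r → r ≤ r₀' →
        ENNReal.ofReal (c₁' * r ^ δ) ≤ μH[δ] (Metric.ball x r) ∧
          μH[δ] (Metric.ball x r) ≤ ENNReal.ofReal (c₂' * r ^ δ) := by
  obtain ⟨μ, c₁, c₂, r₀, hc₁, hc₁_lt_one, hc₂, hr₀, -, hreg⟩ := hX
  have hlow x r hr hrr₀ := (hreg x r hr hrr₀).1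
  have hup x r hr hrr₀ := (hreg x r hr hrr₀).2
  refine ⟨c₁ / c₂, 8 ^ δ * c₂ / c₁, r₀ / 2, by positivity, ?_, by positivity,
    fun x r hr hrr₀ ↦ ⟨?_, ?_⟩⟩
  · have h8 : (1 : ℝ) ≤ 8 ^ δ := Real.one_le_rpow (by norm_num) hδ.le
    calc c₁ / c₂ ≤ 1 := (div_le_one (by linarith)).mpr (by linarith)
      _ ≤ 8 ^ δ * c₂ / c₁ := by rw [le_div_iff₀ hc₁]; nlinarith
  · exact ofReal_mul_rpow_le_hausdorffMeasure_ball hδ (by linarith) hr₀ hlow hup x hr (by linarith)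
  · exact hausdorffMeasure_ball_le hδ hc₁ hlow hup x hr (by linarith)
end

section
/- Let X be an Ahlfors δ-regular metric space, B₀ ⊆ X a ball, C > 0, and let I be a finite index set and (B_i = B(x_i,ρ_i))_{i∈I} balls with B_i ⊆ B_i^{f/C} := B(x_i,(f(ρ_i)/C)^{1/δ}), such that the balls (B_i^{f/C})_{i∈I} are pairwise disjoint, contained in B₀, and satisfy H^δ(⋃_{i∈I} B_i^{f/C}) ≥ (1/2) H^δ(B₀). Define the probability measure μ = (1/K) ∑_{i∈I} H^δ(B_i^{f/C}) · (H^δ|_{B_i} / H^δ(B_i)), where K = ∑_{i∈I} H^δ(B_i^{f/C}). Then for every ball B = B(x,ρ) ⊆ X intersecting exactly one ball B_i of the collection, μ(B) ≲ (1/H^δ(B₀)) · f(ρ)/C, provided r ↦ r^{-δ} f(r) is decreasing. -/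
open MeasureTheory Filter Set
open scoped ENNReal NNReal

/-- If the ball `B = B(x,ρ)` intersects exactly one ball `B_i` of the disjoint collection, then
for the measure `μ = (1/K) ∑_{i∈I} H^δ(B_i^{f/C}) · (H^δ|_{B_i}/H^δ(B_i))` one has
`μ(B) ≲ (1/H^δ(B₀)) · f(ρ)/C`, with implied constant depending only on the Ahlfors regularity
constants of `X`. -/
theorem stmt10 {X : Type*} [MetricSpace X] [MeasurableSpace X] [BorelSpace X]
    (δ : ℝ) (hδ : 0 < δ)
    (c₁ c₂ r₀ : ℝ) (hc₁ : 0 < c₁) (hc₁₂ : c₁ < c₂) (hr₀ : 0 < r₀)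
    -- Ahlfors δ-regularity of X with respect to H^δ:
    (hreg : ∀ x : X, ∀ r : ℝ, 0 < r → r ≤ r₀ →
      ENNReal.ofReal (c₁ * r ^ δ) ≤ μH[δ] (Metric.ball x r) ∧
        μH[δ] (Metric.ball x r) ≤ ENNReal.ofReal (c₂ * r ^ δ)) :
    ∃ κ : ℝ, 0 < κ ∧
      ∀ (f : ℝ → ℝ), f 0 = 0 → MonotoneOn f (Set.Ici 0) → ContinuousOn f (Set.Ici 0) →
      -- r ↦ r^{-δ} f(r) decreasing:
      (∀ r₁ r₂ : ℝ, 0 < r₁ → r₁ ≤ r₂ → r₂ ^ (-δ) * f r₂ ≤ r₁ ^ (-δ) * f r₁) →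
      ∀ (C : ℝ), 0 < C →
      ∀ (I : Finset ℕ) (x : ℕ → X) (ρ : ℕ → ℝ) (x₀ : X) (R₀ : ℝ), 0 < R₀ →
      (∀ i ∈ I, 0 < ρ i) →
      -- B_i ⊆ B_i^{f/C}, and the enlarged radii are small enough for regularity:
      (∀ i ∈ I, ρ i ≤ (f (ρ i) / C) ^ (1 / δ) ∧ (f (ρ i) / C) ^ (1 / δ) ≤ r₀) →
      -- the balls B_i^{f/C} are pairwise disjoint and contained in B₀:
      ((I : Set ℕ).Pairwise fun i j =>
        Disjoint (Metric.ball (x i) ((f (ρ i) / C) ^ (1 / δ)))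
          (Metric.ball (x j) ((f (ρ j) / C) ^ (1 / δ)))) →
      (∀ i ∈ I, Metric.ball (x i) ((f (ρ i) / C) ^ (1 / δ)) ⊆ Metric.ball x₀ R₀) →
      -- they carry at least half of the measure of B₀:
      μH[δ] (Metric.ball x₀ R₀) / 2 ≤
        μH[δ] (⋃ i ∈ I, Metric.ball (x i) ((f (ρ i) / C) ^ (1 / δ))) →
      -- conclusion, with μ written out explicitly:
      ∀ (y : X) (ρB : ℝ), 0 < ρB →
        (∃! i, i ∈ I ∧ (Metric.ball y ρB ∩ Metric.ball (x i) (ρ i)).Nonempty) →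
        ((∑ i ∈ I, μH[δ] (Metric.ball (x i) ((f (ρ i) / C) ^ (1 / δ))))⁻¹ •
            ∑ i ∈ I,
              (μH[δ] (Metric.ball (x i) ((f (ρ i) / C) ^ (1 / δ))) /
                  μH[δ] (Metric.ball (x i) (ρ i))) •
                (μH[δ] : Measure X).restrict (Metric.ball (x i) (ρ i)))
            (Metric.ball y ρB)
          ≤ ENNReal.ofReal (κ * f ρB / C) / μH[δ] (Metric.ball x₀ R₀) := by

  have hc₂ : 0 < c₂ := hc₁.trans hc₁₂
  refine ⟨2 * c₂ ^ 2 / c₁, by positivity, ?_⟩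
  intro f hf0 hfmono hfcont hdec C hC I x ρ x₀ R₀ hR₀ hρpos hsub hdisj hsubB₀ hhalf y ρB hρB hex
  obtain ⟨i₀, ⟨hi₀I, hi₀ne⟩, huniq⟩ := hex
  have hfnn : ∀ r : ℝ, 0 ≤ r → 0 ≤ f r := fun r hr => by
    have := hfmono Set.self_mem_Ici hr hr
    rwa [hf0] at this
  have hρ₀ : 0 < ρ i₀ := hρpos i₀ hi₀I
  obtain ⟨hr1, hr2⟩ := hsub i₀ hi₀I
  have hfρ₀ : 0 < f (ρ i₀) := by
    rcases (hfnn _ hρ₀.le).lt_or_eq with h | h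
    · exact h
    · exfalso
      rw [← h, zero_div, Real.zero_rpow (one_div_ne_zero hδ.ne')] at hr1
      exact absurd (hρ₀.trans_le hr1) (lt_irrefl 0)
  have hrfpos : 0 < (f (ρ i₀) / C) ^ (1 / δ) := hρ₀.trans_le hr1
  have hρ₀r₀ : ρ i₀ ≤ r₀ := hr1.trans hr2
  have hpow : ((f (ρ i₀) / C) ^ (1 / δ)) ^ δ = f (ρ i₀) / C := by
    rw [← Real.rpow_mul (div_nonneg hfρ₀.le hC.le), one_div, inv_mul_cancel₀ hδ.ne',
      Real.rpow_one]
  -- abbreviations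
  set H₀ := μH[δ] (Metric.ball x₀ R₀) with hH₀
  set a := μH[δ] (Metric.ball (x i₀) ((f (ρ i₀) / C) ^ (1 / δ))) with ha
  set b := μH[δ] (Metric.ball (x i₀) (ρ i₀)) with hb
  set m := μH[δ] (Metric.ball y ρB ∩ Metric.ball (x i₀) (ρ i₀)) with hm
  have hbub : ENNReal.ofReal (c₁ * ρ i₀ ^ δ) ≤ b ∧ b ≤ ENNReal.ofReal (c₂ * ρ i₀ ^ δ) :=
    hreg (x i₀) (ρ i₀) hρ₀ hρ₀r₀
  have hb0 : b ≠ 0 := by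
    refine fun h => absurd (h ▸ hbub.1) ?_
    simp only [nonpos_iff_eq_zero, ENNReal.ofReal_eq_zero, not_le]
    positivity
  have hbtop : b ≠ ⊤ := (hbub.2.trans_lt ENNReal.ofReal_lt_top).ne
  have haub : a ≤ ENNReal.ofReal (c₂ * (f (ρ i₀) / C)) := by
    have := (hreg (x i₀) _ hrfpos hr2).2
    rwa [hpow] at this
  have hfρB : 0 < f ρB := by
    rcases le_or_gt (ρ i₀) ρB with h | h
    · exact hfρ₀.trans_le (hfmono hρ₀.le (hρ₀.le.trans h) h)
    · have := hdec ρB (ρ i₀) hρB h.le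
      have h1 : 0 < ρ i₀ ^ (-δ) * f (ρ i₀) := by positivity
      have h2 : 0 < ρB ^ (-δ) := by positivity
      nlinarith [Real.rpow_pos_of_pos hρB (-δ)]
  -- key estimate
  have hkey : a / b * m ≤ ENNReal.ofReal (c₂ ^ 2 / c₁ * f ρB / C) := by
    rcases le_or_gt (ρ i₀) ρB with hle | hlt
    · have hmb : m ≤ b := measure_mono Set.inter_subset_right
      calc a / b * m ≤ a / b * b := mul_le_mul_right hmb _
        _ = a := ENNReal.div_mul_cancel hb0 hbtop
        _ ≤ ENNReal.ofReal (c₂ * (f (ρ i₀) / C)) := haub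
        _ ≤ ENNReal.ofReal (c₂ ^ 2 / c₁ * f ρB / C) := by
            apply ENNReal.ofReal_le_ofReal
            have hff : f (ρ i₀) ≤ f ρB := hfmono hρ₀.le (hρ₀.le.trans hle) hle
            have hcc : c₂ ≤ c₂ ^ 2 / c₁ := by rw [le_div_iff₀ hc₁]; nlinarith
            calc c₂ * (f (ρ i₀) / C) = c₂ * f (ρ i₀) / C := by ring
              _ ≤ c₂ ^ 2 / c₁ * f ρB / C := by
                  rw [div_le_div_iff₀ hC hC]
                  have := mul_le_mul hcc hff (hfnn _ hρ₀.le) (by positivity)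
                  nlinarith
    · have hmB : m ≤ ENNReal.ofReal (c₂ * ρB ^ δ) :=
        (measure_mono Set.inter_subset_left).trans
          (hreg y ρB hρB (hlt.le.trans hρ₀r₀)).2
      have hdiv : a / b ≤ ENNReal.ofReal (c₂ * (f (ρ i₀) / C)) / ENNReal.ofReal (c₁ * ρ i₀ ^ δ) :=
        ENNReal.div_le_div haub hbub.1
      calc a / b * m
          ≤ ENNReal.ofReal (c₂ * (f (ρ i₀) / C)) / ENNReal.ofReal (c₁ * ρ i₀ ^ δ) *
              ENNReal.ofReal (c₂ * ρB ^ δ) := mul_le_mul' hdiv hmB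
        _ = ENNReal.ofReal (c₂ * (f (ρ i₀) / C) / (c₁ * ρ i₀ ^ δ) * (c₂ * ρB ^ δ)) := by
            rw [← ENNReal.ofReal_div_of_pos (by positivity), ← ENNReal.ofReal_mul (by positivity)]
        _ ≤ ENNReal.ofReal (c₂ ^ 2 / c₁ * f ρB / C) := by
            apply ENNReal.ofReal_le_ofReal
            have hdec' := hdec ρB (ρ i₀) hρB hlt.le
            have hP : (0:ℝ) < ρ i₀ ^ δ := Real.rpow_pos_of_pos hρ₀ δ
            have hQ : (0:ℝ) < ρB ^ δ := Real.rpow_pos_of_pos hρB δ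
            have hkey2 : f (ρ i₀) * ρB ^ δ / ρ i₀ ^ δ ≤ f ρB := by
              rw [Real.rpow_neg hρ₀.le, Real.rpow_neg hρB.le] at hdec'
              have h4 := mul_le_mul_of_nonneg_left hdec' (le_of_lt (mul_pos hP hQ))
              have e1 : ρ i₀ ^ δ * ρB ^ δ * ((ρ i₀ ^ δ)⁻¹ * f (ρ i₀))
                  = f (ρ i₀) * ρB ^ δ := by field_simp [hP.ne']
              have e2 : ρ i₀ ^ δ * ρB ^ δ * ((ρB ^ δ)⁻¹ * f ρB)
                  = f ρB * ρ i₀ ^ δ := by field_simp [hQ.ne']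
              rw [e1, e2] at h4
              rw [div_le_iff₀ hP]
              exact h4
            have heq : c₂ * (f (ρ i₀) / C) / (c₁ * ρ i₀ ^ δ) * (c₂ * ρB ^ δ)
                = c₂ ^ 2 / (c₁ * C) * (f (ρ i₀) * ρB ^ δ / ρ i₀ ^ δ) := by
              field_simp
            rw [heq]
            calc c₂ ^ 2 / (c₁ * C) * (f (ρ i₀) * ρB ^ δ / ρ i₀ ^ δ)
                ≤ c₂ ^ 2 / (c₁ * C) * f ρB := by
                  apply mul_le_mul_of_nonneg_left hkey2 (by positivity)
              _ = c₂ ^ 2 / c₁ * f ρB / C := by ring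
  -- rewrite LHS
  rw [Measure.smul_apply, Measure.finset_sum_apply, smul_eq_mul]
  simp only [Measure.smul_apply, Measure.restrict_apply measurableSet_ball, smul_eq_mul]
  have hsum : (∑ i ∈ I,
      μH[δ] (Metric.ball (x i) ((f (ρ i) / C) ^ (1 / δ))) / μH[δ] (Metric.ball (x i) (ρ i)) *
        μH[δ] (Metric.ball y ρB ∩ Metric.ball (x i) (ρ i))) = a / b * m := by
    refine Finset.sum_eq_single_of_mem i₀ hi₀I fun j hj hne => ?_
    have hemp : ¬(Metric.ball y ρB ∩ Metric.ball (x j) (ρ j)).Nonempty :=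
      fun hne' => hne (huniq j ⟨hj, hne'⟩)
    rw [Set.not_nonempty_iff_eq_empty.mp hemp, measure_empty, mul_zero]
  rw [hsum]
  -- K bound
  have hKeq : μH[δ] (⋃ i ∈ I, Metric.ball (x i) ((f (ρ i) / C) ^ (1 / δ)))
      = ∑ i ∈ I, μH[δ] (Metric.ball (x i) ((f (ρ i) / C) ^ (1 / δ))) :=
    measure_biUnion_finset hdisj fun i _ => measurableSet_ball
  have hK : H₀ / 2 ≤ ∑ i ∈ I, μH[δ] (Metric.ball (x i) ((f (ρ i) / C) ^ (1 / δ))) :=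
    hhalf.trans_eq hKeq
  calc (∑ i ∈ I, μH[δ] (Metric.ball (x i) ((f (ρ i) / C) ^ (1 / δ))))⁻¹ * (a / b * m)
      ≤ (H₀ / 2)⁻¹ * ENNReal.ofReal (c₂ ^ 2 / c₁ * f ρB / C) :=
        mul_le_mul' (ENNReal.inv_le_inv.mpr hK) hkey
    _ = ENNReal.ofReal (2 * c₂ ^ 2 / c₁ * f ρB / C) / H₀ := by
        rw [ENNReal.inv_div (Or.inl (by norm_num)) (Or.inl (by norm_num))]
        have : (2:ℝ) * c₂ ^ 2 / c₁ * f ρB / C = 2 * (c₂ ^ 2 / c₁ * f ρB / C) := by ring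
        rw [this, ENNReal.ofReal_mul (by norm_num), ENNReal.ofReal_ofNat,
          ENNReal.div_eq_inv_mul, ENNReal.div_eq_inv_mul]
        ring
end
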